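/- Fix γ ∈ (1,2). There exists a constant A_0 > 0 depending only on γ such that: for every integer n ≥ 2, every even positive integer ℓ_0 and every integer M ≥ 1 with 2^M ℓ_0 ≤ n−1, setting ℓ_i = 2^i ℓ_0 for 0 ≤ i ≤ M, for every Borel probability measure μ on ℝ^{Λ_n} and every continuously differentiable f : ℝ^{Λ_n} → ℝ for which all the integrals below are finite, ∑_{i=1}^{M} ∑_{y=1}^{ℓ_{i−1}} ℓ_{i−1}^{−γ} ∫ (∂_{φ(y+ℓ_{i−1})} f − ∂_{φ(y)} f)² dμ ≤ A_0 ∑_{x,y∈Λ_n} p(y−x) ∫ (∂_{φ(y)} f − ∂_{φ(x)} f)² dμ. -/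

import Mathlib

open MeasureTheory Filter ENNReal NNReal

noncomputable section

/-- The normalizing constant `c_γ = (∑_{z∈ℤ, z≠0} |z|^{-(1+γ)})⁻¹`. -/
def cGamma (γ : ℝ) : ℝ := (∑' z : ℤ, if z = 0 then (0:ℝ) else |(z : ℝ)| ^ (-(1 + γ)))⁻¹

/-- The long-range kernel `p(z) = c_γ |z|^{-(1+γ)}` for `z ≠ 0`, `p(0) = 0`. -/
def pker (γ : ℝ) (z : ℝ) : ℝ := if z = 0 then 0 else cGamma γ * |z| ^ (-(1 + γ))

/-- The discrete lattice `Λ_n = {1, …, n−1}`. -/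
abbrev Lam (n : ℕ) : Finset ℕ := Finset.Icc 1 (n - 1)

/-- The configuration space `ℝ^{Λ_n}`. -/
abbrev Conf (n : ℕ) := (↥(Lam n) → ℝ)

/-- The partial derivative `∂_{φ(k)} f` (with value `0` for `k ∉ Λ_n`). -/
def pdN (n : ℕ) (k : ℕ) (f : Conf n → ℝ) (φ : Conf n) : ℝ :=
  if h : k ∈ Lam n then deriv (fun a => f (Function.update φ ⟨k, h⟩ a)) (φ ⟨k, h⟩) else 0

/-- The coordinate `φ(k)` (with value `0` for `k ∉ Λ_n`). -/
def coordN (n : ℕ) (k : ℕ) (φ : Conf n) : ℝ := if h : k ∈ Lam n then φ ⟨k, h⟩ else 0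

/-- The bulk part of the Ginzburg–Landau generator. -/
def GLbulk (γ : ℝ) (n : ℕ) (f : Conf n → ℝ) (φ : Conf n) : ℝ :=
  (1/2) * ∑ x ∈ Lam n, ∑ y ∈ Lam n, pker γ ((y : ℝ) - (x : ℝ)) *
    ((coordN n x φ - coordN n y φ) * (pdN n y f φ - pdN n x f φ)
      + (pdN n y (pdN n y f) φ - pdN n y (pdN n x f) φ
          - pdN n x (pdN n y f) φ + pdN n x (pdN n x f) φ))

/-- The left boundary part of the Ginzburg–Landau generator. -/
def GLleft (Φl : ℝ) (n : ℕ) (f : Conf n → ℝ) (φ : Conf n) : ℝ :=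
  pdN n 1 (pdN n 1 f) φ + (Φl - coordN n 1 φ) * pdN n 1 f φ

/-- The right boundary part of the Ginzburg–Landau generator. -/
def GLright (Φr : ℝ) (n : ℕ) (f : Conf n → ℝ) (φ : Conf n) : ℝ :=
  pdN n (n - 1) (pdN n (n - 1) f) φ + (Φr - coordN n (n - 1) φ) * pdN n (n - 1) f φ

/-- The boundary-driven long-range Ginzburg–Landau generator
`𝓛_n = n^γ (𝓛^ℓ + 𝓛^r + 𝓛^{bulk})`. -/
def GLgen (γ Φl Φr : ℝ) (n : ℕ) (f : Conf n → ℝ) (φ : Conf n) : ℝ :=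
  (n : ℝ) ^ γ * (GLleft Φl n f φ + GLright Φr n f φ + GLbulk γ n f φ)

/-- The Gaussian product measure on `ℝ^{Λ_n}` with unit variances and mean `m x` at
coordinate `x`. -/
def gaussianProduct (n : ℕ) (m : ℕ → ℝ) : Measure (Conf n) :=
  Measure.pi fun x => ProbabilityTheory.gaussianReal (m (x : ℕ)) 1

/-- The discrete stationary equation for the profile `ψ` on `Λ_n = {1, …, n−1}`. -/
def IsDiscreteProfile (γ Φl Φr : ℝ) (n : ℕ) (ψ : ℕ → ℝ) : Prop :=
  ∀ x ∈ Lam n,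
    (∑ y ∈ Lam n, pker γ ((y : ℝ) - (x : ℝ)) * (ψ y - ψ x))
      + (if x = 1 then Φl - ψ 1 else 0) + (if x = n - 1 then Φr - ψ (n - 1) else 0) = 0

-- auxiliary lemmas

lemma mpl_tsum_eq (γ : ℝ) (hγ : 0 < γ) :
    (∑' z : ℤ, if z = 0 then (0:ℝ) else |(z : ℝ)| ^ (-(1 + γ)))
      = ∑' z : ℤ, |(z : ℝ)| ^ (-(1 + γ)) := by
  congr 1; funext z
  by_cases h : z = 0
  · rw [if_pos h, h]
    rw [show ((0:ℤ):ℝ) = 0 by norm_num, abs_zero,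
      Real.zero_rpow (by linarith : -(1+γ) ≠ 0)]
  · simp [h]

lemma cGamma_pos (γ : ℝ) (hγ : 1 < γ) : 0 < cGamma γ := by
  have hsum : Summable fun z : ℤ => |(z : ℝ)| ^ (-(1 + γ)) :=
    Real.summable_abs_int_rpow (by linarith)
  rw [cGamma, mpl_tsum_eq γ (by linarith)]
  refine inv_pos.mpr ?_
  have h1 : (0:ℝ) < |((1:ℤ) : ℝ)| ^ (-(1 + γ)) := by simp
  calc (0:ℝ) < |((1:ℤ) : ℝ)| ^ (-(1 + γ)) := h1
    _ ≤ _ := Summable.le_tsum hsum 1 (fun z _ => Real.rpow_nonneg (abs_nonneg _) _)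

lemma pker_nat (γ : ℝ) (d : ℕ) (hd : 1 ≤ d) :
    pker γ (d : ℝ) = cGamma γ * (d : ℝ) ^ (-(1 + γ)) := by
  have h : (d:ℝ) ≠ 0 := by positivity
  rw [pker, if_neg h, abs_of_nonneg (by positivity)]

lemma pker_nonneg (γ : ℝ) (hγ : 1 < γ) (z : ℝ) : 0 ≤ pker γ z := by
  rw [pker]
  split
  · exact le_refl 0
  · exact mul_nonneg (cGamma_pos γ hγ).le (Real.rpow_nonneg (abs_nonneg _) _)

lemma aux_cancel (A B X : ℝ) (hB : B ≠ 0) : B * (A / B * X) = A * X := by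
  field_simp

lemma geom_half (N : ℕ) : ∑ j ∈ Finset.range N, ((1:ℝ)/2)^j ≤ 2 := by
  rw [geom_sum_eq (by norm_num : (1/2:ℝ) ≠ 1)]
  have h : (0:ℝ) ≤ (1/2:ℝ)^N := by positivity
  have h2 : ((1/2:ℝ)^N - 1)/((1/2:ℝ) - 1) = 2*(1 - (1/2)^N) := by ring
  rw [h2]; nlinarith

lemma geom_aux (ℓ₀ : ℕ) (hℓ₀ : 1 ≤ ℓ₀) (d M : ℕ) :
    ∑ i ∈ Finset.Icc 1 M,
      (if d ≤ 2^(i-1)*ℓ₀ - 1 then (d:ℝ)/((2^(i-1)*ℓ₀ : ℕ):ℝ) else 0) ≤ 2 := by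
  rw [← Finset.sum_filter]
  set s := (Finset.Icc 1 M).filter (fun i => d ≤ 2^(i-1)*ℓ₀ - 1) with hs
  rcases s.eq_empty_or_nonempty with h | h
  · rw [h]; simp
  · set i₀ := s.min' h with hi₀
    have hi₀s : i₀ ∈ s := s.min'_mem h
    have hi₀p : 1 ≤ i₀ ∧ i₀ ≤ M := Finset.mem_Icc.mp (Finset.mem_of_mem_filter _ hi₀s)
    have hd0 : d ≤ 2^(i₀-1)*ℓ₀ - 1 := (Finset.mem_filter.mp hi₀s).2
    have hdR : (d:ℝ) ≤ (2:ℝ)^(i₀-1)*(ℓ₀:ℝ) := by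
      have : d ≤ 2^(i₀-1)*ℓ₀ := le_trans hd0 (Nat.sub_le _ _)
      exact_mod_cast this
    have key : ∀ i ∈ s, (d:ℝ)/((2^(i-1)*ℓ₀ : ℕ):ℝ) ≤ ((1:ℝ)/2)^(i-i₀) := by
      intro i hi
      have hiI : 1 ≤ i ∧ i ≤ M := Finset.mem_Icc.mp (Finset.mem_of_mem_filter _ hi)
      have hii₀ : i₀ ≤ i := s.min'_le i hi
      have hexp : i - 1 = (i - i₀) + (i₀ - 1) := by omega
      have hden : ((2^(i-1)*ℓ₀ : ℕ):ℝ) = (2:ℝ)^(i-i₀) * ((2:ℝ)^(i₀-1)*(ℓ₀:ℝ)) := by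
        push_cast
        rw [hexp, pow_add]; ring
      rw [hden]
      set A := (2:ℝ)^(i₀-1)*(ℓ₀:ℝ) with hA
      have hApos : (0:ℝ) < A := by positivity
      calc (d:ℝ)/((2:ℝ)^(i-i₀)*A) ≤ A/((2:ℝ)^(i-i₀)*A) := by
            apply div_le_div₀ hApos.le hdR (by positivity) (le_refl _)
        _ = ((1:ℝ)/2)^(i-i₀) := by
            rw [div_eq_iff (by positivity : ((2:ℝ)^(i-i₀)*A) ≠ 0), one_div, inv_pow]
            field_simp
    calc ∑ i ∈ s, (d:ℝ)/((2^(i-1)*ℓ₀ : ℕ):ℝ) ≤ ∑ i ∈ s, ((1:ℝ)/2)^(i-i₀) :=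
          Finset.sum_le_sum key
      _ ≤ ∑ i ∈ Finset.Icc i₀ M, ((1:ℝ)/2)^(i-i₀) := by
          refine Finset.sum_le_sum_of_subset_of_nonneg ?_ (fun i _ _ => by positivity)
          intro i hi
          have hiI : 1 ≤ i ∧ i ≤ M := Finset.mem_Icc.mp (Finset.mem_of_mem_filter _ hi)
          exact Finset.mem_Icc.mpr ⟨s.min'_le i hi, hiI.2⟩
      _ = ∑ j ∈ Finset.range (M + 1 - i₀), ((1:ℝ)/2)^j := by
          rw [← Finset.Ico_add_one_right_eq_Icc, Finset.sum_Ico_eq_sum_range]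
          exact Finset.sum_congr rfl (fun j _ => by rw [Nat.add_sub_cancel_left])
      _ ≤ 2 := geom_half _

/-- Abbreviation for the Dirichlet-type expectation. -/
def Eint (n : ℕ) (f : Conf n → ℝ) (μ : Measure (Conf n)) (a b : ℕ) : ℝ :=
  ∫ φ, (pdN n b f φ - pdN n a f φ) ^ 2 ∂μ

lemma Eint_nonneg (n : ℕ) (f : Conf n → ℝ) (μ : Measure (Conf n)) (a b : ℕ) :
    0 ≤ Eint n f μ a b :=
  integral_nonneg fun φ => sq_nonneg _

lemma Eint_triangle (n : ℕ) (f : Conf n → ℝ) (μ : Measure (Conf n))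
    (hInt : ∀ x ∈ Lam n, ∀ y ∈ Lam n,
      Integrable (fun φ => (pdN n y f φ - pdN n x f φ) ^ 2) μ)
    {a b z : ℕ} (ha : a ∈ Lam n) (hb : b ∈ Lam n) (hz : z ∈ Lam n) :
    Eint n f μ a b ≤ 2 * Eint n f μ a z + 2 * Eint n f μ z b := by
  have h1 := hInt a ha b hb
  have h2 := hInt a ha z hz
  have h3 := hInt z hz b hb
  have hpt : ∀ φ, (pdN n b f φ - pdN n a f φ)^2
      ≤ 2*(pdN n z f φ - pdN n a f φ)^2 + 2*(pdN n b f φ - pdN n z f φ)^2 := by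
    intro φ
    nlinarith [sq_nonneg ((pdN n z f φ - pdN n a f φ) - (pdN n b f φ - pdN n z f φ))]
  have hint23 : Integrable
      (fun φ => 2*(pdN n z f φ - pdN n a f φ)^2 + 2*(pdN n b f φ - pdN n z f φ)^2) μ :=
    (h2.const_mul 2).add (h3.const_mul 2)
  calc Eint n f μ a b
      ≤ ∫ φ, (2*(pdN n z f φ - pdN n a f φ)^2 + 2*(pdN n b f φ - pdN n z f φ)^2) ∂μ :=
        integral_mono h1 hint23 hpt
    _ = 2 * Eint n f μ a z + 2 * Eint n f μ z b := by
        rw [integral_add (h2.const_mul 2) (h3.const_mul 2),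
          integral_const_mul, integral_const_mul]
        rfl

/-- The moving particle lemma: the multiscale sum of gradients along
dyadic blocks is controlled by the bulk Dirichlet form, with a constant depending only
on `γ`. -/
theorem moving_particle_lemma
    (γ : ℝ) (hγ : γ ∈ Set.Ioo (1:ℝ) 2) :
    ∃ A₀ : ℝ, 0 < A₀ ∧ ∀ n : ℕ, 2 ≤ n → ∀ ℓ₀ M : ℕ, 0 < ℓ₀ → Even ℓ₀ → 1 ≤ M →
      2 ^ M * ℓ₀ ≤ n - 1 →
      ∀ μ : Measure (Conf n), IsProbabilityMeasure μ →
      ∀ f : Conf n → ℝ, ContDiff ℝ 1 f →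
      (∀ x ∈ Lam n, ∀ y ∈ Lam n,
        Integrable (fun φ => (pdN n y f φ - pdN n x f φ) ^ 2) μ) →
      ∑ i ∈ Finset.Icc 1 M, ∑ y ∈ Finset.Icc 1 (2 ^ (i - 1) * ℓ₀),
          ((2 ^ (i - 1) * ℓ₀ : ℕ) : ℝ) ^ (-γ) *
            ∫ φ, (pdN n (y + 2 ^ (i - 1) * ℓ₀) f φ - pdN n y f φ) ^ 2 ∂μ
        ≤ A₀ * ∑ x ∈ Lam n, ∑ y ∈ Lam n, pker γ ((y : ℝ) - (x : ℝ)) *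
            ∫ φ, (pdN n y f φ - pdN n x f φ) ^ 2 ∂μ := by
  obtain ⟨hγ1, hγ2⟩ := hγ
  have hc : 0 < cGamma γ := cGamma_pos γ hγ1
  refine ⟨16 / cGamma γ, by positivity, ?_⟩
  intro n hn ℓ₀ M hℓ₀ hev hM1 hMn μ hμ f hf hInt
  -- notation
  set E : ℕ → ℕ → ℝ := Eint n f μ with hEdef
  have hErw : ∀ a b : ℕ, (∫ φ, (pdN n b f φ - pdN n a f φ) ^ 2 ∂μ) = E a b :=
    fun a b => rfl
  simp only [hErw]
  have hE0 : ∀ a b, 0 ≤ E a b := fun a b => Eint_nonneg n f μ a b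
  have htri : ∀ a ∈ Lam n, ∀ b ∈ Lam n, ∀ z ∈ Lam n,
      E a b ≤ 2 * E a z + 2 * E z b :=
    fun a ha b hb z hz => Eint_triangle n f μ hInt ha hb hz
  have hℓ₀2 : 2 ≤ ℓ₀ := by
    obtain ⟨m, hm⟩ := hev; omega
  -- block lengths
  have hLi2 : ∀ i : ℕ, 2 ≤ 2^(i-1)*ℓ₀ := by
    intro i
    calc 2 ≤ ℓ₀ := hℓ₀2
      _ = 1 * ℓ₀ := (one_mul _).symm
      _ ≤ 2^(i-1)*ℓ₀ := Nat.mul_le_mul_right _ (Nat.one_le_two_pow)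
  have hLin : ∀ i ∈ Finset.Icc 1 M, 2*(2^(i-1)*ℓ₀) ≤ n - 1 := by
    intro i hi
    obtain ⟨hi1, hiM⟩ := Finset.mem_Icc.mp hi
    have h1 : 2*(2^(i-1)*ℓ₀) = 2^i * ℓ₀ := by
      rw [← mul_assoc, ← pow_succ']
      congr 2
      omega
    rw [h1]
    calc 2^i * ℓ₀ ≤ 2^M * ℓ₀ :=
          Nat.mul_le_mul_right _ (Nat.pow_le_pow_right (by norm_num) hiM)
      _ ≤ n - 1 := hMn
  -- the weight
  set w : ℕ → ℝ := fun i => ((2^(i-1)*ℓ₀ : ℕ):ℝ)^(-γ) / (((2^(i-1)*ℓ₀ : ℕ):ℝ) - 1)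
    with hwdef
  have hlR : ∀ i : ℕ, (2:ℝ) ≤ ((2^(i-1)*ℓ₀ : ℕ):ℝ) := by
    intro i; exact_mod_cast hLi2 i
  have hw0 : ∀ i : ℕ, 0 ≤ w i := by
    intro i
    have := hlR i
    have h1 : (0:ℝ) < ((2^(i-1)*ℓ₀ : ℕ):ℝ) - 1 := by linarith
    have h2 : (0:ℝ) ≤ ((2^(i-1)*ℓ₀ : ℕ):ℝ)^(-γ) := Real.rpow_nonneg (by linarith) _
    positivity
  -- Step A
  have stepA : ∀ i ∈ Finset.Icc 1 M, ∀ y ∈ Finset.Icc 1 (2^(i-1)*ℓ₀),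
      ((2^(i-1)*ℓ₀ : ℕ):ℝ)^(-γ) * E y (y + 2^(i-1)*ℓ₀)
        ≤ ∑ k ∈ Finset.Icc 1 (2^(i-1)*ℓ₀ - 1),
            w i * (2 * E y (y+k) + 2 * E (y+k) (y + 2^(i-1)*ℓ₀)) := by
    intro i hi y hy
    set l := 2^(i-1)*ℓ₀ with hldef
    have hl2 : 2 ≤ l := hLi2 i
    have hl2R : (2:ℝ) ≤ (l:ℝ) := hlR i
    have h2l : 2*l ≤ n - 1 := hLin i hi
    obtain ⟨hy1, hyl⟩ := Finset.mem_Icc.mp hy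
    have hyA : y ∈ Lam n := Finset.mem_Icc.mpr ⟨hy1, by omega⟩
    have hyB : y + l ∈ Lam n := Finset.mem_Icc.mpr ⟨by omega, by omega⟩
    have hcard : (Finset.Icc 1 (l-1)).card = l - 1 := by
      rw [Nat.card_Icc]; omega
    have hcast : ((l-1:ℕ):ℝ) = (l:ℝ) - 1 := by
      push_cast [Nat.cast_sub (by omega : 1 ≤ l)]; ring
    have hl1 : ((l:ℝ) - 1) ≠ 0 := by linarith
    calc ((l:ℕ):ℝ)^(-γ) * E y (y + l)
        = ∑ _k ∈ Finset.Icc 1 (l-1), w i * E y (y + l) := by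
          rw [Finset.sum_const, hcard, nsmul_eq_mul, hcast]
          simp only [hwdef]
          exact (aux_cancel _ _ _ hl1).symm
      _ ≤ ∑ k ∈ Finset.Icc 1 (l-1), w i * (2 * E y (y+k) + 2 * E (y+k) (y + l)) := by
          refine Finset.sum_le_sum (fun k hk => ?_)
          obtain ⟨hk1, hkl⟩ := Finset.mem_Icc.mp hk
          have hzk : y + k ∈ Lam n := Finset.mem_Icc.mpr ⟨by omega, by omega⟩
          exact mul_le_mul_of_nonneg_left (htri y hyA (y+l) hyB (y+k) hzk) (hw0 i)
  -- Step B
  have stepB : ∀ i ∈ Finset.Icc 1 M,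
      ∑ y ∈ Finset.Icc 1 (2^(i-1)*ℓ₀), ∑ k ∈ Finset.Icc 1 (2^(i-1)*ℓ₀ - 1),
          w i * (2 * E y (y+k) + 2 * E (y+k) (y + 2^(i-1)*ℓ₀))
        ≤ ∑ a ∈ Lam n, ∑ b ∈ Lam n,
            (if a < b ∧ b ≤ a + (2^(i-1)*ℓ₀ - 1) then (4 * w i) * E a b else 0) := by
    intro i hi
    set l := 2^(i-1)*ℓ₀ with hldef
    have hl2 : 2 ≤ l := hLi2 i
    have h2l : 2*l ≤ n - 1 := hLin i hi
    set s : Finset (ℕ × ℕ) := (Finset.Icc 1 l) ×ˢ (Finset.Icc 1 (l-1)) with hsdef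
    set t : Finset (ℕ × ℕ) :=
      (Lam n ×ˢ Lam n).filter (fun q => q.1 < q.2 ∧ q.2 ≤ q.1 + (l-1)) with htdef
    set F : ℕ × ℕ → ℝ := fun q => (2 * w i) * E q.1 q.2 with hFdef
    have hF0 : ∀ q, 0 ≤ F q := fun q => mul_nonneg (by nlinarith [hw0 i]) (hE0 _ _)
    have hmem : ∀ p ∈ s, (1 ≤ p.1 ∧ p.1 ≤ l) ∧ (1 ≤ p.2 ∧ p.2 ≤ l - 1) := by
      intro p hp
      rw [hsdef, Finset.mem_product, Finset.mem_Icc, Finset.mem_Icc] at hp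
      exact hp
    -- family 1
    have hfam1 : ∑ p ∈ s, F (p.1, p.1 + p.2) ≤ ∑ q ∈ t, F q := by
      have hinj : ∀ p ∈ s, ∀ q ∈ s,
          (fun p : ℕ × ℕ => (p.1, p.1 + p.2)) p = (fun p : ℕ × ℕ => (p.1, p.1 + p.2)) q
            → p = q := by
        intro p _ q _ h
        simp only [Prod.mk.injEq] at h
        exact Prod.ext h.1 (by omega)
      calc ∑ p ∈ s, F (p.1, p.1 + p.2)
          = ∑ q ∈ s.image (fun p : ℕ × ℕ => (p.1, p.1 + p.2)), F q :=
            (Finset.sum_image hinj).symm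
        _ ≤ ∑ q ∈ t, F q := by
            refine Finset.sum_le_sum_of_subset_of_nonneg ?_ (fun q _ _ => hF0 q)
            intro q hq
            obtain ⟨p, hp, rfl⟩ := Finset.mem_image.mp hq
            obtain ⟨⟨h1, h2⟩, h3, h4⟩ := hmem p hp
            rw [htdef, Finset.mem_filter, Finset.mem_product, Finset.mem_Icc,
              Finset.mem_Icc]
            refine ⟨⟨⟨by omega, by omega⟩, by omega, by omega⟩, by omega, by omega⟩
    -- family 2
    have hfam2 : ∑ p ∈ s, F (p.1 + p.2, p.1 + l) ≤ ∑ q ∈ t, F q := by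
      have hinj : ∀ p ∈ s, ∀ q ∈ s,
          (fun p : ℕ × ℕ => (p.1 + p.2, p.1 + l)) p = (fun p : ℕ × ℕ => (p.1 + p.2, p.1 + l)) q
            → p = q := by
        intro p _ q _ h
        simp only [Prod.mk.injEq] at h
        exact Prod.ext (by omega) (by omega)
      calc ∑ p ∈ s, F (p.1 + p.2, p.1 + l)
          = ∑ q ∈ s.image (fun p : ℕ × ℕ => (p.1 + p.2, p.1 + l)), F q :=
            (Finset.sum_image hinj).symm
        _ ≤ ∑ q ∈ t, F q := by
            refine Finset.sum_le_sum_of_subset_of_nonneg ?_ (fun q _ _ => hF0 q)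
            intro q hq
            obtain ⟨p, hp, rfl⟩ := Finset.mem_image.mp hq
            obtain ⟨⟨h1, h2⟩, h3, h4⟩ := hmem p hp
            rw [htdef, Finset.mem_filter, Finset.mem_product, Finset.mem_Icc,
              Finset.mem_Icc]
            refine ⟨⟨⟨by omega, by omega⟩, by omega, by omega⟩, by omega, by omega⟩
    calc ∑ y ∈ Finset.Icc 1 l, ∑ k ∈ Finset.Icc 1 (l-1),
          w i * (2 * E y (y+k) + 2 * E (y+k) (y + l))
        = ∑ p ∈ s, (F (p.1, p.1 + p.2) + F (p.1 + p.2, p.1 + l)) := by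
          rw [hsdef, Finset.sum_product]
          exact Finset.sum_congr rfl (fun y _ => Finset.sum_congr rfl (fun k _ => by
            rw [hFdef]; ring))
      _ = ∑ p ∈ s, F (p.1, p.1 + p.2) + ∑ p ∈ s, F (p.1 + p.2, p.1 + l) :=
          Finset.sum_add_distrib
      _ ≤ ∑ q ∈ t, F q + ∑ q ∈ t, F q := add_le_add hfam1 hfam2
      _ = ∑ q ∈ t, (4 * w i) * E q.1 q.2 := by
          rw [← Finset.sum_add_distrib]
          exact Finset.sum_congr rfl (fun q _ => by rw [hFdef]; ring)
      _ = ∑ q ∈ Lam n ×ˢ Lam n,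
            (if q.1 < q.2 ∧ q.2 ≤ q.1 + (l-1) then (4 * w i) * E q.1 q.2 else 0) := by
          rw [htdef, Finset.sum_filter]
      _ = ∑ a ∈ Lam n, ∑ b ∈ Lam n,
            (if a < b ∧ b ≤ a + (l-1) then (4 * w i) * E a b else 0) := by
          rw [Finset.sum_product]
  -- Step C
  have stepC : ∀ a ∈ Lam n, ∀ b ∈ Lam n,
      ∑ i ∈ Finset.Icc 1 M,
          (if a < b ∧ b ≤ a + (2^(i-1)*ℓ₀ - 1) then (4 * w i) * E a b else 0)
        ≤ (16 / cGamma γ) * (pker γ ((b:ℝ) - (a:ℝ)) * E a b) := by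
    intro a ha b hb
    have hpk0 : 0 ≤ pker γ ((b:ℝ) - (a:ℝ)) := pker_nonneg γ hγ1 _
    by_cases hab : a < b
    · set d := b - a with hddef
      have hd1 : 1 ≤ d := by omega
      have hdcast : (b:ℝ) - (a:ℝ) = ((d:ℕ):ℝ) := by
        rw [hddef, Nat.cast_sub (le_of_lt hab)]
      have hdpos : (0:ℝ) < (d:ℝ) := by exact_mod_cast hd1
      have hpk : pker γ ((b:ℝ) - (a:ℝ)) = cGamma γ * (d:ℝ)^(-(1+γ)) := by
        rw [hdcast]; exact pker_nat γ d hd1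
      have key : ∀ i ∈ Finset.Icc 1 M,
          (if a < b ∧ b ≤ a + (2^(i-1)*ℓ₀ - 1) then (4 * w i) * E a b else 0)
            ≤ (if d ≤ 2^(i-1)*ℓ₀ - 1 then (d:ℝ)/((2^(i-1)*ℓ₀ : ℕ):ℝ) else 0) *
                ((8 / cGamma γ) * (pker γ ((b:ℝ) - (a:ℝ)) * E a b)) := by
        intro i hi
        by_cases hcond : d ≤ 2^(i-1)*ℓ₀ - 1
        · rw [if_pos (⟨hab, by omega⟩ : a < b ∧ b ≤ a + (2^(i-1)*ℓ₀ - 1)), if_pos hcond]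
          set l := 2^(i-1)*ℓ₀ with hldef
          have hl2R : (2:ℝ) ≤ (l:ℝ) := hlR i
          have hlpos : (0:ℝ) < (l:ℝ) := by linarith
          have hdl : (d:ℝ) ≤ (l:ℝ) := by
            have : d ≤ l := by omega
            exact_mod_cast this
          have hX : (l:ℝ)^(-γ) ≤ (d:ℝ)^(-γ) :=
            Real.rpow_le_rpow_of_nonpos hdpos hdl (by linarith)
          have hXpos : (0:ℝ) < (l:ℝ)^(-γ) := Real.rpow_pos_of_pos hlpos _
          have hYpos : (0:ℝ) < (d:ℝ)^(-γ) := Real.rpow_pos_of_pos hdpos _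
          have hsplit : (d:ℝ)^(-(1+γ)) = ((d:ℝ)^(-γ))/(d:ℝ) := by
            rw [show -(1+γ) = -γ + (-1) by ring, Real.rpow_add hdpos,
              Real.rpow_neg_one]
            ring
          have hco : 4 * w i ≤
              (d:ℝ)/((l : ℕ):ℝ) * ((8 / cGamma γ) * pker γ ((b:ℝ) - (a:ℝ))) := by
            rw [hpk, hsplit]
            simp only [hwdef]
            have h1 : ((l:ℝ) - 1) > 0 := by linarith
            have hrhs : (d:ℝ)/(l:ℝ) * (8 / cGamma γ * (cGamma γ * ((d:ℝ)^(-γ)/(d:ℝ))))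
                = 8 * (d:ℝ)^(-γ) / (l:ℝ) := by
              field_simp
            calc 4 * ((l:ℝ)^(-γ) / ((l:ℝ) - 1))
                ≤ 8 * (d:ℝ)^(-γ) / (l:ℝ) := by
                  rw [← mul_div_assoc, div_le_div_iff₀ h1 hlpos]
                  nlinarith [mul_nonneg hXpos.le (by linarith : (0:ℝ) ≤ (l:ℝ) - 2),
                    mul_le_mul_of_nonneg_right hX (by linarith : (0:ℝ) ≤ (l:ℝ) - 1)]
              _ = (d:ℝ)/(l:ℝ) * (8 / cGamma γ * (cGamma γ * ((d:ℝ)^(-γ)/(d:ℝ)))) :=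
                  hrhs.symm
          calc (4 * w i) * E a b
              ≤ ((d:ℝ)/((l : ℕ):ℝ) * ((8 / cGamma γ) * pker γ ((b:ℝ) - (a:ℝ)))) * E a b :=
                mul_le_mul_of_nonneg_right hco (hE0 a b)
            _ = (d:ℝ)/((l : ℕ):ℝ) * ((8 / cGamma γ) * (pker γ ((b:ℝ) - (a:ℝ)) * E a b)) := by
                ring
        · rw [if_neg (fun hcc => hcond (by omega)), if_neg hcond, zero_mul]
      calc ∑ i ∈ Finset.Icc 1 M,
            (if a < b ∧ b ≤ a + (2^(i-1)*ℓ₀ - 1) then (4 * w i) * E a b else 0)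
          ≤ ∑ i ∈ Finset.Icc 1 M,
              (if d ≤ 2^(i-1)*ℓ₀ - 1 then (d:ℝ)/((2^(i-1)*ℓ₀ : ℕ):ℝ) else 0) *
                ((8 / cGamma γ) * (pker γ ((b:ℝ) - (a:ℝ)) * E a b)) :=
            Finset.sum_le_sum key
        _ = (∑ i ∈ Finset.Icc 1 M,
              (if d ≤ 2^(i-1)*ℓ₀ - 1 then (d:ℝ)/((2^(i-1)*ℓ₀ : ℕ):ℝ) else 0)) *
                ((8 / cGamma γ) * (pker γ ((b:ℝ) - (a:ℝ)) * E a b)) := by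
            rw [Finset.sum_mul]
        _ ≤ 2 * ((8 / cGamma γ) * (pker γ ((b:ℝ) - (a:ℝ)) * E a b)) := by
            refine mul_le_mul_of_nonneg_right (geom_aux ℓ₀ (by omega) d M) ?_
            have := hE0 a b
            positivity
        _ = (16 / cGamma γ) * (pker γ ((b:ℝ) - (a:ℝ)) * E a b) := by ring
    · have hz : ∀ i ∈ Finset.Icc 1 M,
          (if a < b ∧ b ≤ a + (2^(i-1)*ℓ₀ - 1) then (4 * w i) * E a b else 0) = 0 :=
        fun i _ => if_neg (fun hcc => hab hcc.1)
      rw [Finset.sum_congr rfl hz, Finset.sum_const, smul_zero]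
      have := hE0 a b
      positivity
  -- assemble
  calc ∑ i ∈ Finset.Icc 1 M, ∑ y ∈ Finset.Icc 1 (2^(i-1)*ℓ₀),
        ((2^(i-1)*ℓ₀ : ℕ):ℝ)^(-γ) * E y (y + 2^(i-1)*ℓ₀)
      ≤ ∑ i ∈ Finset.Icc 1 M, ∑ y ∈ Finset.Icc 1 (2^(i-1)*ℓ₀),
          ∑ k ∈ Finset.Icc 1 (2^(i-1)*ℓ₀ - 1),
            w i * (2 * E y (y+k) + 2 * E (y+k) (y + 2^(i-1)*ℓ₀)) :=
        Finset.sum_le_sum (fun i hi => Finset.sum_le_sum (fun y hy => stepA i hi y hy))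
    _ ≤ ∑ i ∈ Finset.Icc 1 M, ∑ a ∈ Lam n, ∑ b ∈ Lam n,
          (if a < b ∧ b ≤ a + (2^(i-1)*ℓ₀ - 1) then (4 * w i) * E a b else 0) :=
        Finset.sum_le_sum stepB
    _ = ∑ a ∈ Lam n, ∑ b ∈ Lam n, ∑ i ∈ Finset.Icc 1 M,
          (if a < b ∧ b ≤ a + (2^(i-1)*ℓ₀ - 1) then (4 * w i) * E a b else 0) := by
        rw [Finset.sum_comm]
        exact Finset.sum_congr rfl (fun a _ => Finset.sum_comm)
    _ ≤ ∑ a ∈ Lam n, ∑ b ∈ Lam n,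
          (16 / cGamma γ) * (pker γ ((b:ℝ) - (a:ℝ)) * E a b) :=
        Finset.sum_le_sum (fun a ha => Finset.sum_le_sum (fun b hb => stepC a ha b hb))
    _ = (16 / cGamma γ) * ∑ x ∈ Lam n, ∑ y ∈ Lam n,
          pker γ ((y:ℝ) - (x:ℝ)) * E x y := by
        rw [Finset.mul_sum]
        exact Finset.sum_congr rfl (fun a _ => by rw [Finset.mul_sum])
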